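/- arXiv:1405.0369 — 3 statements merged into one kernel-verified Lean document; each statement's English description precedes it below -/
import Mathlib

section
/- Let be the 4×4 real matrix with rows (0,1,0,0), (1/(D_n τ_n), −c/D_n, (1/D_n)(1/τ_n − 1/τ_hn), 0), (0,0,0,1), (0,0, 1/(D_h τ_hn), −c/D_h), where D_n, D_h, τ_n, τ_hn, c > 0. Then the characteristic polynomial of equals (1/(D_n D_h))·(D_n λ² + cλ − 1/τ_n)·(D_h λ² + cλ − 1/τ_hn), and has exactly two eigenvalues with positive real part and two with negative real part (all four real). -/
/-!
The matrix is block upper triangular with two companion-type diagonal blocks, so its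
characteristic polynomial is the product of the two block quadratics `Dλ² + cλ - 1/τ`.
Each of these has positive leading coefficient and negative constant term, so its roots
are real (the discriminant exceeds `c²`) and have product `-1/(Dτ) < 0`: one root is
negative and one positive.
-/

theorem det_blockTriangular_companion_sub_smul {R : Type*} [CommRing R] (a b e f g lam : R) :
    (Matrix.of ![![0, 1, 0, 0], ![a, b, e, 0], ![0, 0, 0, 1], ![0, 0, f, g]] -
        lam • (1 : Matrix (Fin 4) (Fin 4) R)).det =
      (lam ^ 2 - b * lam - a) * (lam ^ 2 - g * lam - f) := by
  simp [Matrix.det_succ_row_zero, Fin.sum_univ_succ, Fin.succAbove, Matrix.one_apply]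
  ring

theorem exists_quadratic_sub_eq_mul_sub_mul_sub {a b p : ℝ} (ha : 0 < a) (hp : 0 < p) :
    ∃ r₁ r₂ : ℝ, r₁ < 0 ∧ 0 < r₂ ∧ ∀ x, a * x ^ 2 + b * x - p = a * (x - r₁) * (x - r₂) := by
  set s := √(b ^ 2 + 4 * a * p)
  have hs : s ^ 2 = b ^ 2 + 4 * a * p := Real.sq_sqrt (by nlinarith [sq_nonneg b])
  have hb : |b| < s := Real.lt_sqrt_of_sq_lt (by rw [sq_abs]; nlinarith)
  obtain ⟨hbs, hsb⟩ := abs_lt.mp hb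
  refine ⟨(-b - s) / (2 * a), (-b + s) / (2 * a), div_neg_of_neg_of_pos (by linarith) (by linarith),
    div_pos (by linarith) (by linarith), fun x => ?_⟩
  field_simp
  linear_combination hs

theorem stmt_9_general (Dn Dh τn τhn c : ℝ) (hDn : 0 < Dn) (hDh : 0 < Dh)
    (hτn : 0 < τn) (hτhn : 0 < τhn)
    (A : Matrix (Fin 4) (Fin 4) ℝ)
    (hA : A = Matrix.of
      ![![0, 1, 0, 0],
        ![1 / (Dn * τn), -(c / Dn), (1 / Dn) * (1 / τn - 1 / τhn), 0],
        ![0, 0, 0, 1],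
        ![0, 0, 1 / (Dh * τhn), -(c / Dh)]]) :
    (∀ lam : ℝ,
      (A - lam • (1 : Matrix (Fin 4) (Fin 4) ℝ)).det =
        (1 / (Dn * Dh)) * (Dn * lam ^ 2 + c * lam - 1 / τn) *
          (Dh * lam ^ 2 + c * lam - 1 / τhn)) ∧
    ∃ μ₁ μ₂ μ₃ μ₄ : ℝ, μ₁ < 0 ∧ μ₂ < 0 ∧ 0 < μ₃ ∧ 0 < μ₄ ∧
      ∀ lam : ℝ,
        (A - lam • (1 : Matrix (Fin 4) (Fin 4) ℝ)).det =
          (lam - μ₁) * (lam - μ₂) * (lam - μ₃) * (lam - μ₄) := by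
  have charpoly : ∀ lam : ℝ, (A - lam • (1 : Matrix (Fin 4) (Fin 4) ℝ)).det =
      (1 / (Dn * Dh)) * (Dn * lam ^ 2 + c * lam - 1 / τn) *
        (Dh * lam ^ 2 + c * lam - 1 / τhn) := by
    intro lam
    rw [hA, det_blockTriangular_companion_sub_smul]
    field_simp
    ring
  refine ⟨charpoly, ?_⟩
  obtain ⟨μ₁, μ₃, hμ₁, hμ₃, hn⟩ :=
    exists_quadratic_sub_eq_mul_sub_mul_sub (b := c) hDn (one_div_pos.mpr hτn)
  obtain ⟨μ₂, μ₄, hμ₂, hμ₄, hh⟩ :=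
    exists_quadratic_sub_eq_mul_sub_mul_sub (b := c) hDh (one_div_pos.mpr hτhn)
  refine ⟨μ₁, μ₂, μ₃, μ₄, hμ₁, hμ₂, hμ₃, hμ₄, fun lam => ?_⟩
  rw [charpoly, hn, hh]
  field_simp

theorem stmt_9 (Dn Dh τn τhn c : ℝ) (hDn : 0 < Dn) (hDh : 0 < Dh)
    (hτn : 0 < τn) (hτhn : 0 < τhn) (hc : 0 < c)
    (A : Matrix (Fin 4) (Fin 4) ℝ)
    (hA : A = Matrix.of
      ![![0, 1, 0, 0],
        ![1 / (Dn * τn), -(c / Dn), (1 / Dn) * (1 / τn - 1 / τhn), 0],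
        ![0, 0, 0, 1],
        ![0, 0, 1 / (Dh * τhn), -(c / Dh)]]) :
    (∀ lam : ℝ,
      (A - lam • (1 : Matrix (Fin 4) (Fin 4) ℝ)).det =
        (1 / (Dn * Dh)) * (Dn * lam ^ 2 + c * lam - 1 / τn) *
          (Dh * lam ^ 2 + c * lam - 1 / τhn)) ∧
    ∃ μ₁ μ₂ μ₃ μ₄ : ℝ, μ₁ < 0 ∧ μ₂ < 0 ∧ 0 < μ₃ ∧ 0 < μ₄ ∧
      ∀ lam : ℝ,
        (A - lam • (1 : Matrix (Fin 4) (Fin 4) ℝ)).det =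
          (lam - μ₁) * (lam - μ₂) * (lam - μ₃) * (lam - μ₄) :=
  stmt_9_general Dn Dh τn τhn c hDn hDh hτn hτhn A hA
end

section
/- Let D_n, D_h > 0, 0 < τ_n, τ_h < ∞, τ_hn > τ_h, and let (v_n, v_h) be a C² solution of −D_n v_n'' − c v_n' = (1−v_n−v_h)v_n/τ_n + v_h/τ_hn, −D_h v_h'' − c v_h' = (1−v_n−v_h)v_h/τ_h − v_h/τ_hn on ℝ, with v_n, v_h ≥ 0. Suppose v_h attains a positive maximum at a point x_h (i.e., v_h(x_h) = sup v_h > 0, v_h'(x_h) = 0, v_h''(x_h) ≤ 0). Then v_h(x_h) ≤ 1 − τ_h/τ_hn. -/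
theorem stmt_13 (Dn Dh τn τh τhn c : ℝ) (hDn : 0 < Dn) (hDh : 0 < Dh)
    (hτn : 0 < τn) (hτh : 0 < τh) (hτhn : τh < τhn)
    (vn vh : ℝ → ℝ) (hvn : ContDiff ℝ 2 vn) (hvh : ContDiff ℝ 2 vh)
    (heqn : ∀ x, -Dn * deriv (deriv vn) x - c * deriv vn x =
      (1 - vn x - vh x) * vn x / τn + vh x / τhn)
    (heqh : ∀ x, -Dh * deriv (deriv vh) x - c * deriv vh x =
      (1 - vn x - vh x) * vh x / τh - vh x / τhn)
    (hvn0 : ∀ x, 0 ≤ vn x) (hvh0 : ∀ x, 0 ≤ vh x)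
    (xh : ℝ) (hmax : ∀ x, vh x ≤ vh xh) (hpos : 0 < vh xh)
    (hd1 : deriv vh xh = 0) (hd2 : deriv (deriv vh) xh ≤ 0) :
    vh xh ≤ 1 - τh / τhn := by
  have h := heqh xh
  rw [hd1] at h
  have hτhn0 : 0 < τhn := hτh.trans hτhn
  have hlhs : 0 ≤ -Dh * deriv (deriv vh) xh - c * 0 := by nlinarith
  rw [h] at hlhs
  have hn := hvn0 xh
  rw [div_sub_div _ _ (ne_of_gt hτh) (ne_of_gt hτhn0)] at hlhs
  rw [le_div_iff₀ (mul_pos hτh hτhn0)] at hlhs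
  have hkey : τh / τhn ≤ 1 - vh xh := by
    rw [div_le_iff₀ hτhn0]
    nlinarith
  linarith
end

section
/- Let D_n > 0, 0 < τ_n, τ_h < ∞, τ_hn > 0, and let (v_n, v_h) be a C² nonnegative solution of the traveling-wave system −D_n v_n'' − c v_n' = (1−v_n−v_h)v_n/τ_n + v_h/τ_hn, −D_h v_h'' − c v_h' = (1−v_n−v_h)v_h/τ_h − v_h/τ_hn. Suppose v_n attains a positive maximum at x_n (so v_n'(x_n) = 0, v_n''(x_n) ≤ 0, v_n(x_n) > 0). Then v_n(x_n) ≤ max{1, τ_n/τ_hn}. -/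
theorem stmt_14 (Dn Dh τn τh τhn c : ℝ) (hDn : 0 < Dn) (hDh : 0 < Dh)
    (hτn : 0 < τn) (hτh : 0 < τh) (hτhn : 0 < τhn)
    (vn vh : ℝ → ℝ) (hvn : ContDiff ℝ 2 vn) (hvh : ContDiff ℝ 2 vh)
    (heqn : ∀ x, -Dn * deriv (deriv vn) x - c * deriv vn x =
      (1 - vn x - vh x) * vn x / τn + vh x / τhn)
    (heqh : ∀ x, -Dh * deriv (deriv vh) x - c * deriv vh x =
      (1 - vn x - vh x) * vh x / τh - vh x / τhn)
    (hvn0 : ∀ x, 0 ≤ vn x) (hvh0 : ∀ x, 0 ≤ vh x)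
    (xn : ℝ) (hmax : ∀ x, vn x ≤ vn xn) (hpos : 0 < vn xn)
    (hd1 : deriv vn xn = 0) (hd2 : deriv (deriv vn) xn ≤ 0) :
    vn xn ≤ max 1 (τn / τhn) := by
  by_contra hc
  push_neg at hc
  rw [max_lt_iff] at hc
  obtain ⟨h1, h2⟩ := hc
  have h := heqn xn
  rw [hd1] at h
  have hvh := hvh0 xn
  rw [div_lt_iff₀ hτhn] at h2
  have hrhs : 0 ≤ (1 - vn xn - vh xn) * vn xn / τn + vh xn / τhn := by
    rw [← h]; nlinarith
  rw [div_add_div _ _ (ne_of_gt hτn) (ne_of_gt hτhn), le_div_iff₀ (by positivity)] at hrhs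
  nlinarith [mul_pos hpos (sub_pos.2 h1), mul_nonneg hvh (sub_pos.2 h2).le]
end
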